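/- Let a, b ∈ ℝ³ be nonzero vectors with angle τ between them, and let P_a, P_b ∈ ℝ^{3×3} be the orthogonal projections onto the lines spanned by a and b, P_a = (a ⊗ a)/|a|², P_b = (b ⊗ b)/|b|². Then the operator norm of P_a − P_b equals |sin τ|, and |sin τ| ≤ |a − b| / |a|. Consequently, for the projection Π(x,y,z) = ((y×ν(x))·z)(y×ν(x))/|y×ν(x)|² + y with |y × ν(x)| ≥ |y¹ × ν(x)| bounded below appropriately, one has |∂Π/∂z^j(x, y¹, z) − ∂Π/∂z^j(x, y², z)| ≤ |y¹ − y²| for y¹, y² ∈ U, x ∈ Ω_φ, z ∈ ℝ³, j ∈ {1,2,3}. -/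

import Mathlib

/-!
Statement 18 (Lemma `lem:diff between derivatives of Pi`): the operator norm of the
difference of the orthogonal projections onto the lines spanned by `a` and `b` equals
`|sin τ|` (`τ` the angle between `a` and `b`), `|sin τ| ≤ |a−b|/|a|`, and consequently the
`z`-derivatives of `Π` are `1`-Lipschitz in `y`.
-/

open MeasureTheory Metric Set
open scoped RealInnerProductSpace Topology

noncomputable section

abbrev E2 := EuclideanSpace ℝ (Fin 2)
abbrev E3 := EuclideanSpace ℝ (Fin 3)

def mk3 (a b c : ℝ) : E3 := (WithLp.equiv 2 (Fin 3 → ℝ)).symm ![a, b, c]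

/-- The open cylinder `C(a,r)`. -/
def cyl (a : E3) (r : ℝ) : Set E3 :=
  {y | Real.sqrt ((y 0 - a 0) ^ 2 + (y 1 - a 1) ^ 2) < r ∧ |y 2 - a 2| < r}

def proj2 (x : E3) : E2 := (WithLp.equiv 2 (Fin 2 → ℝ)).symm ![x 0, x 1]

/-- `Ω_φ = {x ∈ C(0,1) : x³ < φ(x¹,x²)}`. -/
def Ωset (φ : E2 → ℝ) : Set E3 := {x ∈ cyl 0 1 | x 2 < φ (proj2 x)}

/-- The partial derivatives `φ_{x¹}, φ_{x²}`. -/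
def dφ (φ : E2 → ℝ) (p : E2) (i : Fin 2) : ℝ := fderiv ℝ φ p (EuclideanSpace.single i 1)

/-- The unit normal `ν = (−φ_{x¹}, −φ_{x²}, 1)/√(φ_{x¹}² + φ_{x²}² + 1)` of the graph of
`φ`, extended vertically to all of `ℝ³`. -/
def νgraph (φ : E2 → ℝ) (x : E3) : E3 :=
  (Real.sqrt (dφ φ (proj2 x) 0 ^ 2 + dφ φ (proj2 x) 1 ^ 2 + 1))⁻¹ •
    mk3 (-(dφ φ (proj2 x) 0)) (-(dφ φ (proj2 x) 1)) 1

/-- The cross product on `ℝ³` (Euclidean coordinates). -/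
def cross3 (a b : E3) : E3 :=
  (WithLp.equiv 2 (Fin 3 → ℝ)).symm
    (crossProduct ((WithLp.equiv 2 (Fin 3 → ℝ)) a) ((WithLp.equiv 2 (Fin 3 → ℝ)) b))

/-- `Π(x,y,z) = ((y×ν(x))·z)(y×ν(x))/|y×ν(x)|² + y`, the orthogonal projection of `z` onto
the line through `y` spanned by `y × ν(x)`. -/
def Pimap (φ : E2 → ℝ) (x y z : E3) : E3 :=
  (⟪cross3 y (νgraph φ x), z⟫ / ‖cross3 y (νgraph φ x)‖ ^ 2) • cross3 y (νgraph φ x) + y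

/-- The orthogonal projection of `ℝ³` onto the line spanned by `a`:
`P_a = (a ⊗ a)/|a|²`, as a continuous linear map `z ↦ (⟪a,z⟫/|a|²) a`. -/
def lineProj (a : E3) : E3 →L[ℝ] E3 :=
  (‖a‖ ^ 2)⁻¹ • ((innerSL ℝ a).smulRight a)


lemma lineProj_apply (a z : E3) : lineProj a z = (⟪a, z⟫ / ‖a‖ ^ 2) • a := by
  simp [lineProj, smul_smul, div_eq_inv_mul]

lemma lineProj_apply_unit {u : E3} (hu : ‖u‖ = 1) (z : E3) : lineProj u z = ⟪u, z⟫ • u := by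
  rw [lineProj_apply, hu]; norm_num

lemma key_normsq {u v : E3} (hu : ‖u‖ = 1) (hv : ‖v‖ = 1) (z : E3) :
    ‖(lineProj u - lineProj v) z‖ ^ 2 =
      ⟪u, z⟫ ^ 2 + ⟪v, z⟫ ^ 2 - 2 * ⟪u, v⟫ * ⟪u, z⟫ * ⟪v, z⟫ := by
  rw [ContinuousLinearMap.sub_apply, lineProj_apply_unit hu, lineProj_apply_unit hv,
    norm_sub_sq_real]
  simp only [norm_smul, real_inner_smul_left, real_inner_smul_right, mul_pow, sq_abs,
    Real.norm_eq_abs, real_inner_self_eq_norm_sq, hu, hv]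
  ring

lemma unit_opNorm {u v : E3} (hu : ‖u‖ = 1) (hv : ‖v‖ = 1) {c : ℝ} (hc : ⟪u, v⟫ = c) :
    ‖lineProj u - lineProj v‖ = Real.sqrt (1 - c ^ 2) := by
  have hvu : ⟪v, u⟫ = c := by rw [real_inner_comm]; exact hc
  have hc2 : c ^ 2 ≤ 1 := by
    have h := abs_real_inner_le_norm u v
    rw [hu, hv, hc] at h
    nlinarith [sq_abs c, abs_nonneg c]
  have upper : ∀ z : E3, ‖(lineProj u - lineProj v) z‖ ≤ Real.sqrt (1 - c ^ 2) * ‖z‖ := by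
    intro z
    have hkey := key_normsq hu hv z
    rw [hc] at hkey
    obtain ⟨s, hs⟩ : ∃ s, ⟪u, z⟫ = s := ⟨_, rfl⟩
    obtain ⟨t, ht⟩ : ∃ t, ⟪v, z⟫ = t := ⟨_, rfl⟩
    rw [hs, ht] at hkey
    have hQ0 : 0 ≤ s ^ 2 + t ^ 2 - 2 * c * s * t := by rw [← hkey]; positivity
    have hinner : ⟪s • (u - c • v) + t • (v - c • u), z⟫
        = s ^ 2 + t ^ 2 - 2 * c * s * t := by
      simp only [inner_add_left, inner_sub_left, real_inner_smul_left, hs, ht]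
      ring
    have hwn : ‖s • (u - c • v) + t • (v - c • u)‖ ^ 2
        = (1 - c ^ 2) * (s ^ 2 + t ^ 2 - 2 * c * s * t) := by
      rw [← real_inner_self_eq_norm_sq]
      simp only [inner_add_left, inner_add_right, inner_sub_left, inner_sub_right,
        real_inner_smul_left, real_inner_smul_right]
      simp only [hc, hvu, real_inner_self_eq_norm_sq, hu, hv]
      ring
    have hcs := real_inner_le_norm (s • (u - c • v) + t • (v - c • u)) z
    rw [hinner] at hcs
    have hQle : s ^ 2 + t ^ 2 - 2 * c * s * t ≤ (1 - c ^ 2) * ‖z‖ ^ 2 := by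
      rcases eq_or_lt_of_le hQ0 with h0 | h0
      · nlinarith [sq_nonneg ‖z‖]
      · have h2 : (s ^ 2 + t ^ 2 - 2 * c * s * t) ^ 2
            ≤ ‖s • (u - c • v) + t • (v - c • u)‖ ^ 2 * ‖z‖ ^ 2 := by
          nlinarith [norm_nonneg (s • (u - c • v) + t • (v - c • u)), norm_nonneg z]
        rw [hwn] at h2
        nlinarith
    calc ‖(lineProj u - lineProj v) z‖ = Real.sqrt (‖(lineProj u - lineProj v) z‖ ^ 2) :=
          (Real.sqrt_sq (norm_nonneg _)).symm
      _ ≤ Real.sqrt ((1 - c ^ 2) * ‖z‖ ^ 2) := Real.sqrt_le_sqrt (by rw [hkey]; exact hQle)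
      _ = Real.sqrt (1 - c ^ 2) * ‖z‖ := by
          rw [Real.sqrt_mul (by nlinarith), Real.sqrt_sq (norm_nonneg z)]
  refine le_antisymm (ContinuousLinearMap.opNorm_le_bound _ (Real.sqrt_nonneg _) upper) ?_
  rcases eq_or_lt_of_le hc2 with h1 | h1
  · have h0 : Real.sqrt (1 - c ^ 2) = 0 := by rw [h1]; simp
    rw [h0]; exact norm_nonneg _
  · have hz₀n : ‖u - c • v‖ ^ 2 = 1 - c ^ 2 := by
      rw [← real_inner_self_eq_norm_sq]
      simp only [inner_sub_left, inner_sub_right, real_inner_smul_left,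
        real_inner_smul_right]
      simp only [hc, hvu, real_inner_self_eq_norm_sq, hu, hv]
      ring
    have hTz : ‖(lineProj u - lineProj v) (u - c • v)‖ ^ 2 = (1 - c ^ 2) ^ 2 := by
      rw [key_normsq hu hv]
      simp only [inner_sub_right, real_inner_smul_right]
      simp only [hc, hvu, real_inner_self_eq_norm_sq, hu, hv]
      ring
    have hTz' : ‖(lineProj u - lineProj v) (u - c • v)‖ = 1 - c ^ 2 := by
      nlinarith [norm_nonneg ((lineProj u - lineProj v) (u - c • v))]
    have hz₀' : ‖u - c • v‖ = Real.sqrt (1 - c ^ 2) := by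
      rw [← hz₀n, Real.sqrt_sq (norm_nonneg _)]
    have hle := (lineProj u - lineProj v).le_opNorm (u - c • v)
    rw [hTz', hz₀'] at hle
    have hsp : 0 < Real.sqrt (1 - c ^ 2) := Real.sqrt_pos.mpr (by linarith)
    have hss : Real.sqrt (1 - c ^ 2) * Real.sqrt (1 - c ^ 2) = 1 - c ^ 2 :=
      Real.mul_self_sqrt (by linarith)
    nlinarith [norm_nonneg (lineProj u - lineProj v)]

lemma lineProj_smul (a : E3) (r : ℝ) (hr : r ≠ 0) : lineProj (r • a) = lineProj a := by
  rcases eq_or_ne a 0 with rfl | ha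
  · simp [lineProj]
  · have ha' : ‖a‖ ≠ 0 := norm_ne_zero_iff.mpr ha
    refine ContinuousLinearMap.ext fun z => ?_
    rw [lineProj_apply, lineProj_apply, real_inner_smul_left, norm_smul, mul_pow, smul_smul]
    congr 1
    rw [Real.norm_eq_abs, sq_abs]
    field_simp

lemma part1 (a b : E3) (ha : a ≠ 0) (hb : b ≠ 0) :
    ‖lineProj a - lineProj b‖ = |Real.sin (InnerProductGeometry.angle a b)| := by
  have ha' : ‖a‖ ≠ 0 := norm_ne_zero_iff.mpr ha
  have hb' : ‖b‖ ≠ 0 := norm_ne_zero_iff.mpr hb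
  have hu : ‖(‖a‖⁻¹ • a)‖ = 1 := norm_smul_inv_norm ha
  have hv : ‖(‖b‖⁻¹ • b)‖ = 1 := norm_smul_inv_norm hb
  have hc : ⟪(‖a‖⁻¹ • a), (‖b‖⁻¹ • b)⟫ = Real.cos (InnerProductGeometry.angle a b) := by
    rw [InnerProductGeometry.cos_angle, real_inner_smul_left, real_inner_smul_right]
    field_simp
  have hsin : Real.sin (InnerProductGeometry.angle a b)
      = Real.sqrt (1 - Real.cos (InnerProductGeometry.angle a b) ^ 2) :=
    Real.sin_eq_sqrt_one_sub_cos_sq (InnerProductGeometry.angle_nonneg a b)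
      (InnerProductGeometry.angle_le_pi a b)
  have hnn : 0 ≤ Real.sin (InnerProductGeometry.angle a b) :=
    Real.sin_nonneg_of_nonneg_of_le_pi (InnerProductGeometry.angle_nonneg a b)
      (InnerProductGeometry.angle_le_pi a b)
  rw [← lineProj_smul a (‖a‖⁻¹) (inv_ne_zero ha'), ← lineProj_smul b (‖b‖⁻¹) (inv_ne_zero hb'),
    unit_opNorm hu hv hc, abs_of_nonneg hnn, hsin]

lemma part2 (a b : E3) (ha : a ≠ 0) (hb : b ≠ 0) :
    |Real.sin (InnerProductGeometry.angle a b)| ≤ ‖a - b‖ / ‖a‖ := by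
  have ha' : (0:ℝ) < ‖a‖ := norm_pos_iff.mpr ha
  have hb' : (0:ℝ) < ‖b‖ := norm_pos_iff.mpr hb
  have hsin : Real.sin (InnerProductGeometry.angle a b)
      = Real.sqrt (1 - Real.cos (InnerProductGeometry.angle a b) ^ 2) :=
    Real.sin_eq_sqrt_one_sub_cos_sq (InnerProductGeometry.angle_nonneg a b)
      (InnerProductGeometry.angle_le_pi a b)
  have hnn : 0 ≤ Real.sin (InnerProductGeometry.angle a b) :=
    Real.sin_nonneg_of_nonneg_of_le_pi (InnerProductGeometry.angle_nonneg a b)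
      (InnerProductGeometry.angle_le_pi a b)
  rw [abs_of_nonneg hnn, hsin, InnerProductGeometry.cos_angle]
  have hD : ‖a - b‖ ^ 2 = ‖a‖ ^ 2 - 2 * ⟪a, b⟫ + ‖b‖ ^ 2 := norm_sub_sq_real a b
  have hle : 1 - (⟪a, b⟫ / (‖a‖ * ‖b‖)) ^ 2 ≤ (‖a - b‖ / ‖a‖) ^ 2 := by
    rw [div_pow, div_pow, mul_pow]
    have h1 : 1 - ⟪a, b⟫ ^ 2 / (‖a‖ ^ 2 * ‖b‖ ^ 2)
        = (‖a‖ ^ 2 * ‖b‖ ^ 2 - ⟪a, b⟫ ^ 2) / (‖a‖ ^ 2 * ‖b‖ ^ 2) := by field_simp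
    rw [h1, div_le_div_iff₀ (by positivity) (by positivity), hD]
    nlinarith [mul_nonneg (sq_nonneg ‖a‖) (sq_nonneg (‖b‖ ^ 2 - ⟪a, b⟫))]
  calc Real.sqrt (1 - (⟪a, b⟫ / (‖a‖ * ‖b‖)) ^ 2)
      ≤ Real.sqrt ((‖a - b‖ / ‖a‖) ^ 2) := Real.sqrt_le_sqrt hle
    _ = ‖a - b‖ / ‖a‖ := Real.sqrt_sq (by positivity)

lemma cross3_apply (a b : E3) (i : Fin 3) :
    cross3 a b i = ![a 1 * b 2 - a 2 * b 1, a 2 * b 0 - a 0 * b 2,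
      a 0 * b 1 - a 1 * b 0] i := by
  simp [cross3, cross_apply]

lemma norm_sq_E3 (x : E3) : ‖x‖ ^ 2 = x 0 ^ 2 + x 1 ^ 2 + x 2 ^ 2 := by
  rw [← real_inner_self_eq_norm_sq, PiLp.inner_apply, Fin.sum_univ_three]
  simp [sq]

lemma cross3_norm_le (a b : E3) : ‖cross3 a b‖ ≤ ‖a‖ * ‖b‖ := by
  have h : ‖cross3 a b‖ ^ 2 ≤ (‖a‖ * ‖b‖) ^ 2 := by
    rw [norm_sq_E3, mul_pow, norm_sq_E3, norm_sq_E3]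
    simp only [cross3_apply]
    simp only [Matrix.cons_val_zero, Matrix.cons_val_one, Matrix.head_cons,
      Matrix.cons_val_two, Matrix.tail_cons]
    nlinarith [sq_nonneg (a 0 * b 0 + a 1 * b 1 + a 2 * b 2)]
  calc ‖cross3 a b‖ = Real.sqrt (‖cross3 a b‖ ^ 2) := (Real.sqrt_sq (norm_nonneg _)).symm
    _ ≤ Real.sqrt ((‖a‖ * ‖b‖) ^ 2) := Real.sqrt_le_sqrt h
    _ = ‖a‖ * ‖b‖ := Real.sqrt_sq (by positivity)

lemma cross3_sub_left (a b w : E3) : cross3 (a - b) w = cross3 a w - cross3 b w := by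
  refine PiLp.ext fun i => ?_
  simp only [PiLp.sub_apply, cross3_apply]
  fin_cases i <;> simp <;> ring

lemma norm_νgraph (φ : E2 → ℝ) (x : E3) : ‖νgraph φ x‖ = 1 := by
  set p := dφ φ (proj2 x) 0
  set q := dφ φ (proj2 x) 1
  have h1 : (0:ℝ) < p ^ 2 + q ^ 2 + 1 := by positivity
  have hr : 0 < Real.sqrt (p ^ 2 + q ^ 2 + 1) := Real.sqrt_pos.mpr h1
  have hmk : ‖mk3 (-p) (-q) 1‖ = Real.sqrt (p ^ 2 + q ^ 2 + 1) := by
    have := norm_sq_E3 (mk3 (-p) (-q) 1)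
    have h0 : mk3 (-p) (-q) 1 0 = -p := rfl
    have h1' : mk3 (-p) (-q) 1 1 = -q := rfl
    have h2 : mk3 (-p) (-q) 1 2 = 1 := rfl
    rw [h0, h1', h2] at this
    rw [← Real.sqrt_sq (norm_nonneg _), this]
    ring_nf
  rw [νgraph, norm_smul, hmk, Real.norm_eq_abs, abs_of_pos (inv_pos.mpr hr),
    inv_mul_cancel₀ (ne_of_gt hr)]

lemma fderiv_Pimap (φ : E2 → ℝ) (x y z : E3) :
    fderiv ℝ (fun z' => Pimap φ x y z') z = lineProj (cross3 y (νgraph φ x)) := by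
  have heq : (fun z' => Pimap φ x y z')
      = fun z' => lineProj (cross3 y (νgraph φ x)) z' + y :=
    funext fun z' => by rw [Pimap, lineProj_apply]
  rw [heq]
  exact (((lineProj (cross3 y (νgraph φ x))).hasFDerivAt (x := z)).add_const y).fderiv

/-- For nonzero `a, b ∈ ℝ³` with angle `τ` between them:
`‖P_a − P_b‖ = |sin τ|` and `|sin τ| ≤ ‖a − b‖/‖a‖`.  Consequently, for the projection
`Π`, if `‖y¹ × ν(x)‖ ≥ 1` (and `y² × ν(x) ≠ 0`), then
`|∂Π/∂z^j(x,y¹,z) − ∂Π/∂z^j(x,y²,z)| ≤ |y¹ − y²|`. -/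
theorem stmt18 :
    (∀ a b : E3, a ≠ 0 → b ≠ 0 →
      ‖lineProj a - lineProj b‖ = |Real.sin (InnerProductGeometry.angle a b)| ∧
      |Real.sin (InnerProductGeometry.angle a b)| ≤ ‖a - b‖ / ‖a‖) ∧
    (∀ (φ : E2 → ℝ) (U : Set E3) (x y₁ y₂ z : E3) (j : Fin 3),
      y₁ ∈ U → y₂ ∈ U → x ∈ Ωset φ →
      1 ≤ ‖cross3 y₁ (νgraph φ x)‖ → cross3 y₂ (νgraph φ x) ≠ 0 →
      ‖fderiv ℝ (fun z' => Pimap φ x y₁ z') z (EuclideanSpace.single j 1) -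
          fderiv ℝ (fun z' => Pimap φ x y₂ z') z (EuclideanSpace.single j 1)‖ ≤
        ‖y₁ - y₂‖) := by
  constructor
  · intro a b ha hb
    exact ⟨part1 a b ha hb, part2 a b ha hb⟩
  · intro φ U x y₁ y₂ z j _ _ _ h1 h2
    have hc₁ : cross3 y₁ (νgraph φ x) ≠ 0 := by
      intro h
      rw [h, norm_zero] at h1
      linarith
    rw [fderiv_Pimap, fderiv_Pimap, ← ContinuousLinearMap.sub_apply]
    calc ‖(lineProj (cross3 y₁ (νgraph φ x)) - lineProj (cross3 y₂ (νgraph φ x)))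
            (EuclideanSpace.single j 1)‖
        ≤ ‖lineProj (cross3 y₁ (νgraph φ x)) - lineProj (cross3 y₂ (νgraph φ x))‖ *
            ‖EuclideanSpace.single j (1:ℝ)‖ := ContinuousLinearMap.le_opNorm _ _
      _ = ‖lineProj (cross3 y₁ (νgraph φ x)) - lineProj (cross3 y₂ (νgraph φ x))‖ := by
          rw [EuclideanSpace.norm_single, norm_one, mul_one]
      _ = |Real.sin (InnerProductGeometry.angle (cross3 y₁ (νgraph φ x))
            (cross3 y₂ (νgraph φ x)))| := part1 _ _ hc₁ h2
      _ ≤ ‖cross3 y₁ (νgraph φ x) - cross3 y₂ (νgraph φ x)‖ / ‖cross3 y₁ (νgraph φ x)‖ :=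
          part2 _ _ hc₁ h2
      _ ≤ ‖cross3 y₁ (νgraph φ x) - cross3 y₂ (νgraph φ x)‖ :=
          div_le_self (norm_nonneg _) h1
      _ = ‖cross3 (y₁ - y₂) (νgraph φ x)‖ := by rw [cross3_sub_left]
      _ ≤ ‖y₁ - y₂‖ * ‖νgraph φ x‖ := cross3_norm_le _ _
      _ = ‖y₁ - y₂‖ := by rw [norm_νgraph, mul_one]
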